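/- arXiv:1306.1069 — 2 statements merged into one kernel-verified Lean document; each statement's English description precedes it below -/
import Mathlib

section
/- For a 2-HOCA without zero-test, the loop sets stabilize in the counter value: for every σ ∈ Σ and every m ≥ 2·|Σ|·|Q|², Loop_∞((σ,m)) = Loop_∞((σ, 2·|Σ|·|Q|²)). -/
/-!  Level-2 higher-order counter automata without zero-test (2-HOCA).
Storage configurations are nonempty lists in `(Sig × ℕ)`, head = topmost entry. -/

namespace HOCA

/-- Operations of a 2-HOCA without zero-test: level-2 pop, level-2 push
(duplicating the topmost counter under a new symbol), increment of the
topmost counter (`stay(push⊥)`), decrement of the topmost counter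
(`stay(pop)`, undefined at 0), and the identity. -/
inductive HOp (Sig : Type) where
  | pop : HOp Sig
  | push (τ : Sig) : HOp Sig
  | inc : HOp Sig
  | dec : HOp Sig
  | id : HOp Sig

/-- Partial application of an operation to a storage. -/
def applyOp {Sig : Type} : HOp Sig → List (Sig × ℕ) → Option (List (Sig × ℕ))
  | .pop, _ :: t :: s => some (t :: s)
  | .pop, _ => none
  | .push τ, (σ, n) :: s => some ((τ, n) :: (σ, n) :: s)
  | .push _, [] => none
  | .inc, (σ, n) :: s => some ((σ, n + 1) :: s)
  | .inc, [] => none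
  | .dec, (σ, n + 1) :: s => some ((σ, n) :: s)
  | .dec, _ => none
  | .id, s => some s

/-- A 2-HOCA without zero-test: a transition relation; a transition
`Δ q σ op q'` is applicable in state `q` when the topmost symbol is `σ`
(the only tests are top-symbol tests). -/
structure Aut (Q Sig : Type) where
  Δ : Q → Sig → HOp Sig → Q → Prop

abbrev Config (Q Sig : Type) := Q × List (Sig × ℕ)

/-- `IsRun A L cfg lab` : the configurations `cfg 0, …, cfg L` form a run of `A`,
where the `i`-th step tests top-symbol `(lab i).1` and applies operation `(lab i).2`. -/
def IsRun {Q Sig : Type} (A : Aut Q Sig) (L : ℕ) (cfg : ℕ → Config Q Sig)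
    (lab : ℕ → Sig × HOp Sig) : Prop :=
  ∀ i < L, ∃ (n : ℕ) (rest : List (Sig × ℕ)),
    (cfg i).2 = ((lab i).1, n) :: rest ∧
    A.Δ (cfg i).1 (lab i).1 (lab i).2 (cfg (i + 1)).1 ∧
    applyOp (lab i).2 (cfg i).2 = some (cfg (i + 1)).2

/-- The run increases the height by at most `k` (for `k = ⊤`: no bound). -/
def heightBounded {Q Sig : Type} (k : ℕ∞) (L : ℕ) (cfg : ℕ → Config Q Sig) : Prop :=
  ∀ i ≤ L, ((cfg i).2.length : ℕ∞) ≤ ((cfg 0).2.length : ℕ∞) + k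

/-- `Ret_k((σ,m))` : pairs `(q,q')` such that there is a return from
`(q, (σ,m)·s)` to `(q', s)` increasing the height by at most `k`
(the final configuration is the first one whose storage is `s`). -/
def RetSet {Q Sig : Type} (A : Aut Q Sig) (k : ℕ∞) (σ : Sig) (m : ℕ) :
    Set (Q × Q) :=
  { p | ∃ (s : List (Sig × ℕ)) (L : ℕ) (cfg : ℕ → Config Q Sig)
      (lab : ℕ → Sig × HOp Sig),
      s ≠ [] ∧ IsRun A L cfg lab ∧
      cfg 0 = (p.1, (σ, m) :: s) ∧ cfg L = (p.2, s) ∧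
      (∀ i < L, (cfg i).2 ≠ s) ∧ heightBounded k L cfg }

/-- `Loop_k((σ,m))` : pairs `(q,q')` such that there is a loop from
`(q, (σ,m)·s)` to `(q', (σ,m)·s)` never visiting storage `s`,
increasing the height by at most `k`. -/
def LoopSet {Q Sig : Type} (A : Aut Q Sig) (k : ℕ∞) (σ : Sig) (m : ℕ) :
    Set (Q × Q) :=
  { p | ∃ (s : List (Sig × ℕ)) (L : ℕ) (cfg : ℕ → Config Q Sig)
      (lab : ℕ → Sig × HOp Sig),
      IsRun A L cfg lab ∧
      cfg 0 = (p.1, (σ, m) :: s) ∧ cfg L = (p.2, (σ, m) :: s) ∧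
      (∀ i ≤ L, (cfg i).2 ≠ s) ∧ heightBounded k L cfg }

end HOCA

namespace HOCA

variable {Q Sig : Type}

/-! ### inversion lemmas for `applyOp` -/

lemma applyOp_id_iff {w w' : List (Sig × ℕ)} :
    applyOp HOp.id w = some w' ↔ w' = w := by
  simp [applyOp, eq_comm]

lemma applyOp_inc_iff {w w' : List (Sig × ℕ)} :
    applyOp HOp.inc w = some w' ↔
      ∃ σ n rest, w = (σ, n) :: rest ∧ w' = (σ, n + 1) :: rest := by
  constructor
  · intro h
    match w with
    | [] => simp [applyOp] at h
    | (σ, n) :: rest =>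
      refine ⟨σ, n, rest, rfl, ?_⟩
      simp [applyOp] at h; exact h.symm
  · rintro ⟨σ, n, rest, rfl, rfl⟩; simp [applyOp]

lemma applyOp_dec_iff {w w' : List (Sig × ℕ)} :
    applyOp HOp.dec w = some w' ↔
      ∃ σ n rest, w = (σ, n + 1) :: rest ∧ w' = (σ, n) :: rest := by
  constructor
  · intro h
    match w with
    | [] => simp [applyOp] at h
    | (σ, 0) :: rest => simp [applyOp] at h
    | (σ, n + 1) :: rest =>
      refine ⟨σ, n, rest, rfl, ?_⟩
      simp [applyOp] at h; exact h.symm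
  · rintro ⟨σ, n, rest, rfl, rfl⟩; simp [applyOp]

lemma applyOp_push_iff {τ : Sig} {w w' : List (Sig × ℕ)} :
    applyOp (HOp.push τ) w = some w' ↔
      ∃ σ n rest, w = (σ, n) :: rest ∧ w' = (τ, n) :: (σ, n) :: rest := by
  constructor
  · intro h
    match w with
    | [] => simp [applyOp] at h
    | (σ, n) :: rest =>
      refine ⟨σ, n, rest, rfl, ?_⟩
      simp [applyOp] at h; exact h.symm
  · rintro ⟨σ, n, rest, rfl, rfl⟩; simp [applyOp]

lemma applyOp_pop_iff {w w' : List (Sig × ℕ)} :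
    applyOp HOp.pop w = some w' ↔
      ∃ a b rest, w = a :: b :: rest ∧ w' = b :: rest := by
  constructor
  · intro h
    match w with
    | [] => simp [applyOp] at h
    | [a] => simp [applyOp] at h
    | a :: b :: rest =>
      refine ⟨a, b, rest, rfl, ?_⟩
      simp [applyOp] at h; exact h.symm
  · rintro ⟨a, b, rest, rfl, rfl⟩; simp [applyOp]

lemma applyOp_ne_nil {op : HOp Sig} {w w' : List (Sig × ℕ)}
    (h : applyOp op w = some w') (hw : w ≠ []) : w' ≠ [] := by
  cases op with
  | pop => obtain ⟨a, b, rest, _, rfl⟩ := applyOp_pop_iff.1 h; simp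
  | push τ => obtain ⟨σ, n, rest, _, rfl⟩ := applyOp_push_iff.1 h; simp
  | inc => obtain ⟨σ, n, rest, _, rfl⟩ := applyOp_inc_iff.1 h; simp
  | dec => obtain ⟨σ, n, rest, _, rfl⟩ := applyOp_dec_iff.1 h; simp
  | id => rw [applyOp_id_iff.1 h]; exact hw

/-! ### single steps and finite chains -/

def Step (A : Aut Q Sig) (a b : Config Q Sig) : Prop :=
  ∃ σ op n rest, a.2 = (σ, n) :: rest ∧ A.Δ a.1 σ op b.1 ∧
    applyOp op a.2 = some b.2

inductive ChainN (A : Aut Q Sig) : ℕ → Config Q Sig → Config Q Sig → Prop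
  | refl (a : Config Q Sig) : ChainN A 0 a a
  | cons {a b c : Config Q Sig} {n : ℕ} :
      Step A a b → ChainN A n b c → ChainN A (n + 1) a c

lemma ChainN.cast {A : Aut Q Sig} {n m : ℕ} {a b : Config Q Sig}
    (h : ChainN A n a b) (e : n = m) : ChainN A m a b := e ▸ h

lemma ChainN.concat {A : Aut Q Sig} {n₁ n₂ : ℕ} {a b c : Config Q Sig}
    (h₁ : ChainN A n₁ a b) (h₂ : ChainN A n₂ b c) :
    ChainN A (n₁ + n₂) a c := by
  induction h₁ with
  | refl a => exact h₂.cast (by omega)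
  | cons s _ ih => exact (ChainN.cons s (ih h₂)).cast (by omega)

lemma ChainN.single {A : Aut Q Sig} {a b : Config Q Sig} (h : Step A a b) :
    ChainN A 1 a b := ChainN.cons h (ChainN.refl b)

/-! ### conversions between `IsRun` packages and chains -/

lemma isRun_shift {A : Aut Q Sig} {L : ℕ} {cfg : ℕ → Config Q Sig}
    {lab : ℕ → Sig × HOp Sig} (h : IsRun A (L + 1) cfg lab) :
    IsRun A L (fun i => cfg (i + 1)) (fun i => lab (i + 1)) := by
  intro i hi
  exact h (i + 1) (by omega)

lemma run_to_chain {A : Aut Q Sig} :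
    ∀ (L : ℕ) (cfg : ℕ → Config Q Sig) (lab : ℕ → Sig × HOp Sig),
      IsRun A L cfg lab → ChainN A L (cfg 0) (cfg L) := by
  intro L
  induction L with
  | zero => intro cfg lab _; exact ChainN.refl _
  | succ L ih =>
    intro cfg lab h
    obtain ⟨n, rest, htop, htr, happ⟩ := h 0 (by omega)
    refine ChainN.cons ⟨(lab 0).1, (lab 0).2, n, rest, htop, htr, happ⟩ ?_
    exact ih (fun i => cfg (i + 1)) (fun i => lab (i + 1)) (isRun_shift h)

lemma chain_to_run {A : Aut Q Sig} {n : ℕ} {a b : Config Q Sig}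
    (d : Sig × HOp Sig) (h : ChainN A n a b) :
    ∃ cfg lab, IsRun A n cfg lab ∧ cfg 0 = a ∧ cfg n = b := by
  induction h with
  | refl a =>
    exact ⟨fun _ => a, fun _ => d, fun i hi => absurd hi (by omega), rfl, rfl⟩
  | @cons a b c n s hc ih =>
    obtain ⟨cfg, lab, hrun, h0, hn⟩ := ih
    obtain ⟨σ, op, k, rest, htop, htr, happ⟩ := s
    refine ⟨fun i => if i = 0 then a else cfg (i - 1),
            fun i => if i = 0 then (σ, op) else lab (i - 1), ?_, by simp, ?_⟩
    · intro i hi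
      by_cases hi0 : i = 0
      · subst hi0
        simp only [if_pos rfl, if_neg (by omega : ¬ (0 + 1 = 0))]
        refine ⟨k, rest, htop, ?_, ?_⟩
        · simpa [h0] using htr
        · simpa [h0] using happ
      · have h1 : ¬ (i + 1 = 0) := by omega
        simp only [if_neg hi0, if_neg h1]
        have hlt : i - 1 < n := by omega
        have := hrun (i - 1) hlt
        have e : i - 1 + 1 = i + 1 - 1 := by omega
        rwa [e] at this
    · have h1 : ¬ (n + 1 = 0) := by omega
      simp only [if_neg h1]
      simpa using hn

/-! ### relative steps: behaviour over a fixed untouched suffix -/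

/-- A step from `u ++ t` (with `u ≠ []`) either stays strictly above `t`
    and is a faithful relative step on `u`, or pops exactly down to `t`. -/
lemma step_suffix {A : Aut Q Sig} {q : Q} {u t : List (Sig × ℕ)}
    {b : Config Q Sig} (hs : Step A (q, u ++ t) b) (hu : u ≠ []) :
    (∃ u', u' ≠ [] ∧ b.2 = u' ++ t ∧ Step A (q, u) (b.1, u')) ∨
    (∃ p, u = [p] ∧ b.2 = t ∧ A.Δ q p.1 HOp.pop b.1) := by
  obtain ⟨σ, op, k, rest, htop, htr, happ⟩ := hs
  obtain ⟨p, u₀, rfl⟩ : ∃ p u₀, u = p :: u₀ := by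
    cases u with
    | nil => exact absurd rfl hu
    | cons p u₀ => exact ⟨p, u₀, rfl⟩
  simp only [List.cons_append] at htop
  rw [List.cons_eq_cons] at htop
  obtain ⟨rfl, hrest⟩ := htop
  subst hrest
  cases op with
  | id =>
    rw [applyOp_id_iff] at happ
    exact Or.inl ⟨(σ, k) :: u₀, by simp, by simpa using happ,
      σ, HOp.id, k, u₀, rfl, htr, applyOp_id_iff.mpr rfl⟩
  | inc =>
    simp only [applyOp, List.cons_append, Option.some.injEq] at happ
    refine Or.inl ⟨(σ, k + 1) :: u₀, by simp, by simp [happ.symm],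
      σ, HOp.inc, k, u₀, rfl, htr, by simp [applyOp]⟩
  | dec =>
    cases k with
    | zero => simp [applyOp] at happ
    | succ k =>
      simp only [applyOp, List.cons_append, Option.some.injEq] at happ
      refine Or.inl ⟨(σ, k) :: u₀, by simp, by simp [happ.symm],
        σ, HOp.dec, k + 1, u₀, rfl, htr, by simp [applyOp]⟩
  | push τ =>
    simp only [applyOp, List.cons_append, Option.some.injEq] at happ
    refine Or.inl ⟨(τ, k) :: (σ, k) :: u₀, by simp, by simp [happ.symm],
      σ, HOp.push τ, k, u₀, rfl, htr, by simp [applyOp]⟩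
  | pop =>
    cases u₀ with
    | nil =>
      cases t with
      | nil => simp [applyOp] at happ
      | cons c t₀ =>
        simp only [applyOp, List.nil_append, List.cons_append,
          Option.some.injEq] at happ
        exact Or.inr ⟨(σ, k), rfl, happ.symm, htr⟩
    | cons r u₁ =>
      simp only [applyOp, List.cons_append, Option.some.injEq] at happ
      refine Or.inl ⟨r :: u₁, by simp, by simp [happ.symm],
        σ, HOp.pop, k, r :: u₁, rfl, htr, by simp [applyOp]⟩
/-- A relative step can be transported on top of any additional suffix. -/
lemma step_lift {A : Aut Q Sig} {q q' : Q} {u u' : List (Sig × ℕ)}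
    (h : Step A (q, u) (q', u')) (t : List (Sig × ℕ)) :
    Step A (q, u ++ t) (q', u' ++ t) := by
  obtain ⟨σ, op, k, rest, htop, htr, happ⟩ := h
  simp only at htop
  subst htop
  refine ⟨σ, op, k, rest ++ t, by simp, htr, ?_⟩
  cases op with
  | id =>
    rw [applyOp_id_iff] at happ; subst happ; exact applyOp_id_iff.mpr rfl
  | inc =>
    simp only [applyOp, Option.some.injEq] at happ
    subst happ; simp [applyOp]
  | dec =>
    cases k with
    | zero => simp [applyOp] at happ
    | succ k =>
      simp only [applyOp, Option.some.injEq] at happ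
      subst happ; simp [applyOp]
  | push τ =>
    simp only [applyOp, Option.some.injEq] at happ
    subst happ; simp [applyOp]
  | pop =>
    cases rest with
    | nil => simp [applyOp] at happ
    | cons r u₁ =>
      simp only [applyOp, Option.some.injEq] at happ
      subst happ; simp [applyOp]

lemma chain_lift {A : Aut Q Sig} {n : ℕ} {a b : Config Q Sig}
    (h : ChainN A n a b) (t : List (Sig × ℕ)) :
    ChainN A n (a.1, a.2 ++ t) (b.1, b.2 ++ t) := by
  induction h with
  | refl a => exact ChainN.refl _
  | @cons a b c n s hc ih =>
    exact ChainN.cons (step_lift ((show ((a.1, a.2) : Config Q Sig) = a by rfl) ▸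
      (show ((b.1, b.2) : Config Q Sig) = b by rfl) ▸ s) t) ih

/-- Extract a relative chain from an absolute run that never touches `s`. -/
lemma extract_rel {A : Aut Q Sig} :
    ∀ (L : ℕ) (cfg : ℕ → Config Q Sig) (lab : ℕ → Sig × HOp Sig),
      IsRun A L cfg lab →
      ∀ (s u₀ : List (Sig × ℕ)), (cfg 0).2 = u₀ ++ s → u₀ ≠ [] →
      (∀ i ≤ L, (cfg i).2 ≠ s) →
      ∃ u₁, u₁ ≠ [] ∧ (cfg L).2 = u₁ ++ s ∧
        ChainN A L ((cfg 0).1, u₀) ((cfg L).1, u₁) := by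
  intro L
  induction L with
  | zero =>
    intro cfg lab _ s u₀ h0 hu _
    exact ⟨u₀, hu, h0, ChainN.refl _⟩
  | succ L ih =>
    intro cfg lab h s u₀ h0 hu hne
    obtain ⟨n, rest, htop, htr, happ⟩ := h 0 (by omega)
    have hstep : Step A (cfg 0) (cfg 1) := ⟨(lab 0).1, (lab 0).2, n, rest, htop, htr, happ⟩
    have hstep' : Step A ((cfg 0).1, u₀ ++ s) (cfg 1) := by
      have : ((cfg 0).1, u₀ ++ s) = cfg 0 := by
        rw [← h0]
      rw [this]; exact hstep
    rcases step_suffix hstep' hu with ⟨u', hu', hb, hrel⟩ | ⟨p, _, hb, _⟩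
    · obtain ⟨u₁, hu₁, hL, hchain⟩ := ih (fun i => cfg (i + 1)) (fun i => lab (i + 1))
        (isRun_shift h) s u' hb hu' (fun i hi => hne (i + 1) (by omega))
      exact ⟨u₁, hu₁, hL, ChainN.cons hrel hchain⟩
    · exact absurd hb (hne 1 (by omega))

/-- First-exposure decomposition: a chain from `u ++ t` that ends at height
    `≤ |t|` returns to `t` for a first time via a `pop`. -/
lemma first_expose {A : Aut Q Sig} :
    ∀ (n : ℕ) (q : Q) (u t : List (Sig × ℕ)) (c : Config Q Sig),
      ChainN A n (q, u ++ t) c → u ≠ [] → c.2.length ≤ t.length →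
      ∃ n₁ n₂ r p q₃, n = n₁ + 1 + n₂ ∧
        ChainN A n₁ (q, u) (r, [p]) ∧ A.Δ r p.1 HOp.pop q₃ ∧
        ChainN A n₂ (q₃, t) c := by
  intro n
  induction n with
  | zero =>
    intro q u t c hchain hu hlen
    cases hchain with
    | refl =>
      exfalso
      have : u.length + t.length ≤ t.length := by simpa using hlen
      have : u = [] := by
        cases u with
        | nil => rfl
        | cons a u₀ =>
          exfalso; simp only [List.length_cons] at this; omega
      exact hu this
  | succ n ih =>
    intro q u t c hchain hu hlen
    cases hchain with
    | @cons _ b _ _ s hc =>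
      rcases step_suffix s hu with ⟨u', hu', hb, hrel⟩ | ⟨p, hp, hb, hpop⟩
      · have hb' : b = (b.1, u' ++ t) := by
          rw [← hb]
        rw [hb'] at hc
        obtain ⟨n₁, n₂, r, p, q₃, hsum, hc₁, hΔ, hc₂⟩ := ih b.1 u' t c hc hu' hlen
        exact ⟨n₁ + 1, n₂, r, p, q₃, by omega, ChainN.cons hrel hc₁, hΔ, hc₂⟩
      · refine ⟨0, n, q, p, b.1, by omega, ?_, ?_, ?_⟩
        · rw [hp]; exact ChainN.refl _
        · exact hpop
        · have hb' : b = (b.1, t) := by rw [← hb]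
          rwa [hb'] at hc
/-! ### the min-height walk calculus `MW` -/

inductive MW (A : Aut Q Sig) : ℕ → Sig → Q × ℕ → Q × ℕ → Prop
  | refl (n : ℕ) (τ : Sig) (q : Q) (x : ℕ) : MW A n τ (q, x) (q, x)
  | step_id {n : ℕ} {τ : Sig} {q q₁ : Q} {x : ℕ} {e : Q × ℕ} :
      A.Δ q τ HOp.id q₁ → MW A n τ (q₁, x) e → MW A (n + 1) τ (q, x) e
  | step_inc {n : ℕ} {τ : Sig} {q q₁ : Q} {x : ℕ} {e : Q × ℕ} :
      A.Δ q τ HOp.inc q₁ → MW A n τ (q₁, x + 1) e → MW A (n + 1) τ (q, x) e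
  | step_dec {n : ℕ} {τ : Sig} {q q₁ : Q} {x : ℕ} {e : Q × ℕ} :
      A.Δ q τ HOp.dec q₁ → MW A n τ (q₁, x) e → MW A (n + 1) τ (q, x + 1) e
  | step_exc {n₁ n₂ : ℕ} {τ τ₂ : Sig} {q q₁ r q₃ : Q} {x y : ℕ} {e : Q × ℕ} :
      A.Δ q τ (HOp.push τ₂) q₁ → MW A n₁ τ₂ (q₁, x) (r, y) →
      A.Δ r τ₂ HOp.pop q₃ → MW A n₂ τ (q₃, x) e → MW A (n₁ + n₂ + 2) τ (q, x) e

lemma MW.cast {A : Aut Q Sig} {n m : ℕ} {τ : Sig} {a b : Q × ℕ}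
    (h : MW A n τ a b) (e : n = m) : MW A m τ a b := e ▸ h

lemma MW.mono {A : Aut Q Sig} :
    ∀ {n : ℕ} {τ : Sig} {a b : Q × ℕ}, MW A n τ a b →
      ∀ {m : ℕ}, n ≤ m → MW A m τ a b := by
  intro n τ a b h
  induction h with
  | refl n τ q x => intro m _; exact MW.refl m τ q x
  | step_id htr _ ih =>
    intro m hm
    obtain ⟨m', rfl⟩ : ∃ m', m = m' + 1 := ⟨m - 1, by omega⟩
    exact MW.step_id htr (ih (by omega))
  | step_inc htr _ ih =>
    intro m hm
    obtain ⟨m', rfl⟩ : ∃ m', m = m' + 1 := ⟨m - 1, by omega⟩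
    exact MW.step_inc htr (ih (by omega))
  | step_dec htr _ ih =>
    intro m hm
    obtain ⟨m', rfl⟩ : ∃ m', m = m' + 1 := ⟨m - 1, by omega⟩
    exact MW.step_dec htr (ih (by omega))
  | @step_exc n₁ n₂ _ _ _ _ _ _ _ _ _ hpush hin hpop _ ih_in ih_tail =>
    intro m hm
    have h2 : n₂ ≤ m - n₁ - 2 := by omega
    exact (MW.step_exc hpush hin hpop (ih_tail h2)).cast (by omega)

lemma MW.concat {A : Aut Q Sig} {n₁ n₂ : ℕ} {τ : Sig} {a b c : Q × ℕ}
    (h₁ : MW A n₁ τ a b) (h₂ : MW A n₂ τ b c) : MW A (n₁ + n₂) τ a c := by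
  induction h₁ with
  | refl n τ q x => exact h₂.mono (by omega)
  | step_id htr _ ih => exact (MW.step_id htr (ih h₂)).cast (by omega)
  | step_inc htr _ ih => exact (MW.step_inc htr (ih h₂)).cast (by omega)
  | step_dec htr _ ih => exact (MW.step_dec htr (ih h₂)).cast (by omega)
  | step_exc hpush hin hpop _ ih_in ih_tail =>
    exact (MW.step_exc hpush hin hpop (ih_tail h₂)).cast (by omega)

lemma MW.one_id {A : Aut Q Sig} {τ : Sig} {q q₁ : Q} {x : ℕ}
    (h : A.Δ q τ HOp.id q₁) : MW A 1 τ (q, x) (q₁, x) :=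
  MW.step_id h (MW.refl 0 τ q₁ x)

lemma MW.one_inc {A : Aut Q Sig} {τ : Sig} {q q₁ : Q} {x : ℕ}
    (h : A.Δ q τ HOp.inc q₁) : MW A 1 τ (q, x) (q₁, x + 1) :=
  MW.step_inc h (MW.refl 0 τ q₁ (x + 1))

lemma MW.one_dec {A : Aut Q Sig} {τ : Sig} {q q₁ : Q} {x : ℕ}
    (h : A.Δ q τ HOp.dec q₁) : MW A 1 τ (q, x + 1) (q₁, x) :=
  MW.step_dec h (MW.refl 0 τ q₁ x)

/-- Shift a walk up by one. -/
lemma MW.up {A : Aut Q Sig} :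
    ∀ {n : ℕ} {τ : Sig} {a b : Q × ℕ}, MW A n τ a b →
      MW A n τ (a.1, a.2 + 1) (b.1, b.2 + 1) := by
  intro n τ a b h
  induction h with
  | refl n τ q x => exact MW.refl n τ q (x + 1)
  | step_id htr _ ih => exact MW.step_id htr ih
  | step_inc htr _ ih => exact MW.step_inc htr ih
  | step_dec htr _ ih => exact MW.step_dec htr ih
  | step_exc hpush hin hpop _ ih₁ ih₂ =>
    exact MW.step_exc hpush ih₁ hpop ih₂

lemma MW.upk {A : Aut Q Sig} {n : ℕ} {τ : Sig} {a b : Q × ℕ}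
    (h : MW A n τ a b) (k : ℕ) :
    MW A n τ (a.1, a.2 + k) (b.1, b.2 + k) := by
  induction k with
  | zero => simpa using h
  | succ k ih => simpa [Nat.add_assoc] using ih.up

/-! ### from chains to walks -/

lemma chain_to_MW {A : Aut Q Sig} :
    ∀ (n : ℕ) (τ : Sig) (x : ℕ) (q q' : Q) (p : Sig × ℕ),
      ChainN A n (q, [(τ, x)]) (q', [p]) →
      p.1 = τ ∧ ∃ k, MW A k τ (q, x) (q', p.2) := by
  intro n
  induction n using Nat.strong_induction_on with
  | _ n IH =>
    intro τ x q q' p hchain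
    cases hchain with
    | refl =>
      exact ⟨rfl, 0, MW.refl 0 τ q x⟩
    | @cons _ b _ m s hc =>
      obtain ⟨σ, op, k, rest, htop, htr, happ⟩ := s
      simp only [List.cons_eq_cons, List.nil_eq] at htop
      obtain ⟨hp, hrest⟩ := htop
      have hσ : σ = τ := by rw [Prod.ext_iff] at hp; exact hp.1.symm
      have hk : k = x := by rw [Prod.ext_iff] at hp; exact hp.2.symm
      subst hσ; subst hk; subst hrest
      cases op with
      | id =>
        rw [applyOp_id_iff] at happ
        have hb2 : b.2 = [(σ, k)] := by simpa using happ
        have hc : ChainN A m (b.1, [(σ, k)]) (q', [p]) := by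
          rw [← hb2]; exact hc
        obtain ⟨h1, kk, h2⟩ := IH m (by omega) σ k b.1 q' p hc
        exact ⟨h1, kk + 1, MW.step_id htr h2⟩
      | inc =>
        simp only [applyOp, Option.some.injEq] at happ
        have hb2 : b.2 = [(σ, k + 1)] := happ.symm
        have hc : ChainN A m (b.1, [(σ, k + 1)]) (q', [p]) := by
          rw [← hb2]; exact hc
        obtain ⟨h1, kk, h2⟩ := IH m (by omega) σ (k + 1) b.1 q' p hc
        exact ⟨h1, kk + 1, MW.step_inc htr h2⟩
      | dec =>
        cases k with
        | zero => simp [applyOp] at happ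
        | succ k₀ =>
          simp only [applyOp, Option.some.injEq] at happ
          have hb2 : b.2 = [(σ, k₀)] := happ.symm
          have hc : ChainN A m (b.1, [(σ, k₀)]) (q', [p]) := by
            rw [← hb2]; exact hc
          obtain ⟨h1, kk, h2⟩ := IH m (by omega) σ k₀ b.1 q' p hc
          exact ⟨h1, kk + 1, MW.step_dec htr h2⟩
      | pop => simp [applyOp] at happ
      | push τ₂ =>
        simp only [applyOp, Option.some.injEq] at happ
        have hb2 : b.2 = [(τ₂, k)] ++ [(σ, k)] := by
          rw [← happ]; rfl
        have hc : ChainN A m (b.1, [(τ₂, k)] ++ [(σ, k)]) (q', [p]) := by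
          rw [← hb2]; exact hc
        obtain ⟨n₁, n₂, r, p₂, q₃, hsum, hc₁, hΔ, hc₂⟩ :=
          first_expose m b.1 [(τ₂, k)] [(σ, k)] (q', [p]) hc (by simp) (by simp)
        obtain ⟨h1, k₁, hmw₁⟩ := IH n₁ (by omega) τ₂ k b.1 r p₂ hc₁
        obtain ⟨h2, k₂, hmw₂⟩ := IH n₂ (by omega) σ k q₃ q' p hc₂
        rw [h1] at hΔ
        exact ⟨h2, k₁ + k₂ + 2, MW.step_exc (y := p₂.2) htr hmw₁ hΔ hmw₂⟩
      
/-! ### from walks to chains -/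

lemma MW_to_chain {A : Aut Q Sig} :
    ∀ {k : ℕ} {τ : Sig} {a b : Q × ℕ}, MW A k τ a b →
      ∃ n, ChainN A n (a.1, [(τ, a.2)]) (b.1, [(τ, b.2)]) := by
  intro k τ a b h
  induction h with
  | refl n τ q x => exact ⟨0, ChainN.refl _⟩
  | @step_id n τ q q₁ x e htr _ ih =>
    obtain ⟨n', hch⟩ := ih
    exact ⟨n' + 1, ChainN.cons
      (show Step A (q, [(τ, x)]) (q₁, [(τ, x)]) from
        ⟨τ, HOp.id, x, [], rfl, htr, applyOp_id_iff.mpr rfl⟩) hch⟩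
  | @step_inc n τ q q₁ x e htr _ ih =>
    obtain ⟨n', hch⟩ := ih
    exact ⟨n' + 1, ChainN.cons
      (show Step A (q, [(τ, x)]) (q₁, [(τ, x + 1)]) from
        ⟨τ, HOp.inc, x, [], rfl, htr, by simp [applyOp]⟩) hch⟩
  | @step_dec n τ q q₁ x e htr _ ih =>
    obtain ⟨n', hch⟩ := ih
    exact ⟨n' + 1, ChainN.cons
      (show Step A (q, [(τ, x + 1)]) (q₁, [(τ, x)]) from
        ⟨τ, HOp.dec, x + 1, [], rfl, htr, by simp [applyOp]⟩) hch⟩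
  | @step_exc n₁ n₂ τ τ₂ q q₁ r q₃ x y e hpush hin hpop _ ih₁ ih₂ =>
    obtain ⟨m₁, hch₁⟩ := ih₁
    obtain ⟨m₂, hch₂⟩ := ih₂
    have hlift := chain_lift hch₁ [(τ, x)]
    simp only at hlift
    have hstep₀ : Step A (q, [(τ, x)]) (q₁, [(τ₂, x), (τ, x)]) :=
      ⟨τ, HOp.push τ₂, x, [], rfl, hpush, by simp [applyOp]⟩
    have hstepPop : Step A (r, [(τ₂, y), (τ, x)]) (q₃, [(τ, x)]) :=
      ⟨τ₂, HOp.pop, y, [(τ, x)], rfl, hpop, by simp [applyOp]⟩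
    exact ⟨_, ChainN.cons hstep₀ (hlift.concat (ChainN.cons hstepPop hch₂))⟩
/-! ### descent / ascent decompositions of walks -/

lemma MW.fall {A : Aut Q Sig} :
    ∀ (n : ℕ) (τ : Sig) (q : Q) (x : ℕ) (q' : Q) (y : ℕ),
      MW A n τ (q, x) (q', y) → y < x →
      ∃ x₀ n₁ n₂ q₂ q₃, x = x₀ + 1 ∧ n₁ + n₂ < n ∧
        MW A n₁ τ (q, x) (q₂, x) ∧ A.Δ q₂ τ HOp.dec q₃ ∧
        MW A n₂ τ (q₃, x₀) (q', y) := by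
  intro n
  induction n using Nat.strong_induction_on with
  | _ n IH =>
    intro τ q x q' y h hy
    cases h with
    | refl => omega
    | @step_id n' _ _ q₁ _ _ htr htail =>
      obtain ⟨x₀, n₁, n₂, q₂, q₃, hx, hs, P1, hdec, P2⟩ :=
        IH n' (by omega) τ q₁ x q' y htail hy
      exact ⟨x₀, n₁ + 1, n₂, q₂, q₃, hx, by omega, MW.step_id htr P1, hdec, P2⟩
    | @step_inc n' _ _ q₁ _ _ htr htail =>
      obtain ⟨x₀', n₁', n₂', q₂', q₃', hx', hs', P1, hdec', P2⟩ :=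
        IH n' (by omega) τ q₁ (x + 1) q' y htail (by omega)
      have hx0 : x₀' = x := by omega
      rw [hx0] at P2
      obtain ⟨x₀, a, b, q₄, q₅, hx, hab, Pa, hdec, Pb⟩ :=
        IH n₂' (by omega) τ q₃' x q' y P2 hy
      refine ⟨x₀, n₁' + (1 + a) + 1, b, q₄, q₅, hx, by omega, ?_, hdec, Pb⟩
      exact MW.step_inc htr (P1.concat ((MW.one_dec hdec').concat Pa))
    | @step_dec n' _ _ q₁ x₁ _ htr htail =>
      exact ⟨x₁, 0, n', q, q₁, rfl, by omega, MW.refl 0 τ q (x₁ + 1), htr, htail⟩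
    | @step_exc n₁e n₂e _ τ₂ _ q₁ r q₃e _ ye _ hpush hin hpop htail =>
      obtain ⟨x₀, a, b, q₄, q₅, hx, hab, Pa, hdec, Pb⟩ :=
        IH n₂e (by omega) τ q₃e x q' y htail hy
      refine ⟨x₀, n₁e + a + 2, b, q₄, q₅, hx, by omega, ?_, hdec, Pb⟩
      exact MW.step_exc hpush hin hpop Pa

lemma MW.rise {A : Aut Q Sig} :
    ∀ (n : ℕ) (τ : Sig) (q : Q) (x : ℕ) (q' : Q) (y : ℕ),
      MW A n τ (q, x) (q', y) → x < y →
      ∃ n₁ n₂ q₂ q₃, n₁ + n₂ < n ∧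
        MW A n₁ τ (q, x) (q₂, x) ∧ A.Δ q₂ τ HOp.inc q₃ ∧
        MW A n₂ τ (q₃, x + 1) (q', y) := by
  intro n
  induction n using Nat.strong_induction_on with
  | _ n IH =>
    intro τ q x q' y h hy
    cases h with
    | refl => omega
    | @step_id n' _ _ q₁ _ _ htr htail =>
      obtain ⟨n₁, n₂, q₂, q₃, hs, P1, hinc, P2⟩ :=
        IH n' (by omega) τ q₁ x q' y htail hy
      exact ⟨n₁ + 1, n₂, q₂, q₃, by omega, MW.step_id htr P1, hinc, P2⟩
    | @step_inc n' _ _ q₁ _ _ htr htail =>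
      exact ⟨0, n', q, q₁, by omega, MW.refl 0 τ q x, htr, htail⟩
    | @step_dec n' _ _ q₁ x₁ _ htr htail =>
      -- here x = x₁ + 1, tail from (q₁, x₁), y > x > x₁
      obtain ⟨a, b, q₂, q₃, hab, Pa, hinc', Pb⟩ :=
        IH n' (by omega) τ q₁ x₁ q' y htail (by omega)
      -- Pb : from (q₃, x₁+1 = x) to (q', y), y > x
      obtain ⟨c, d, q₄, q₅, hcd, Pc, hinc, Pd⟩ :=
        IH b (by omega) τ q₃ (x₁ + 1) q' y Pb (by omega)
      refine ⟨a + (1 + c) + 1, d, q₄, q₅, by omega, ?_, hinc, Pd⟩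
      exact MW.step_dec htr (Pa.concat ((MW.one_inc hinc').concat Pc))
    | @step_exc n₁e n₂e _ τ₂ _ q₁ r q₃e _ ye _ hpush hin hpop htail =>
      obtain ⟨a, b, q₂, q₃, hab, Pa, hinc, Pb⟩ :=
        IH n₂e (by omega) τ q₃e x q' y htail hy
      exact ⟨n₁e + a + 2, b, q₂, q₃, by omega,
        MW.step_exc hpush hin hpop Pa, hinc, Pb⟩
/-! ### loop and return pair sets via walks -/

def LoopP (A : Aut Q Sig) (τ : Sig) (v : ℕ) : Set (Q × Q) :=
  {p | ∃ n, MW A n τ (p.1, v) (p.2, v)}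

def RetP (A : Aut Q Sig) (τ : Sig) (v : ℕ) : Set (Q × Q) :=
  {p | ∃ n r y, MW A n τ (p.1, v) (r, y) ∧ A.Δ r τ HOp.pop p.2}

lemma loopP_mono {A : Aut Q Sig} {τ : Sig} {v v' : ℕ} (h : v ≤ v') :
    LoopP A τ v ⊆ LoopP A τ v' := by
  rintro ⟨q, q'⟩ ⟨n, hm⟩
  exact ⟨n, by simpa [Nat.add_sub_cancel' h] using hm.upk (v' - v)⟩

lemma retP_mono {A : Aut Q Sig} {τ : Sig} {v v' : ℕ} (h : v ≤ v') :
    RetP A τ v ⊆ RetP A τ v' := by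
  rintro ⟨q, q'⟩ ⟨n, r, y, hm, hpop⟩
  exact ⟨n, r, y + (v' - v), by simpa [Nat.add_sub_cancel' h] using hm.upk (v' - v), hpop⟩

/-- **Transfer lemma.** If at level `m` the loop and return sets already
agree with level `m+1`, then the same collapse propagates to all higher
levels. -/
lemma core_transfer {A : Aut Q Sig} (m : ℕ)
    (hL : ∀ τ (p : Q × Q), p ∈ LoopP A τ (m + 1) → p ∈ LoopP A τ m)
    (hR : ∀ τ (p : Q × Q), p ∈ RetP A τ (m + 1) → p ∈ RetP A τ m) :
    ∀ n : ℕ,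
      (∀ τ z q q', m ≤ z → MW A n τ (q, z + 1) (q', z + 1) →
        (q, q') ∈ LoopP A τ z) ∧
      (∀ τ z q r y q', m ≤ z → MW A n τ (q, z + 1) (r, y) →
        A.Δ r τ HOp.pop q' → (q, q') ∈ RetP A τ z) := by
  intro n
  induction n using Nat.strong_induction_on with
  | _ n IH =>
    constructor
    · -- loop part
      intro τ z q q' hz h
      rcases eq_or_lt_of_le hz with rfl | hz'
      · exact hL τ (q, q') ⟨n, h⟩
      · -- m + 1 ≤ z
        have hz1 : m + 1 ≤ z := hz'
        cases h with
        | refl => exact ⟨0, MW.refl 0 τ q z⟩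
        | @step_id n' _ _ q₁ _ _ htr htail =>
          obtain ⟨k, mw⟩ := (IH n' (by omega)).1 τ z q₁ q' hz htail
          exact ⟨k + 1, MW.step_id htr mw⟩
        | @step_inc n' _ _ q₁ _ _ htr htail =>
          obtain ⟨x₀, n₁, n₂, q₂, q₃, hx, hs, P1, hdec, P2⟩ :=
            MW.fall n' τ q₁ (z + 2) q' (z + 1) htail (by omega)
          have hx0 : x₀ = z + 1 := by omega
          rw [hx0] at P2
          obtain ⟨k₁, mw₁⟩ := (IH n₁ (by omega)).1 τ (z + 1) q₁ q₂ (by omega) P1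
          obtain ⟨k₂, mw₂⟩ := (IH n₂ (by omega)).1 τ z q₃ q' hz P2
          exact ⟨_, MW.step_inc htr (mw₁.concat ((MW.one_dec hdec).concat mw₂))⟩
        | @step_dec n' _ _ q₁ x₁ _ htr htail =>
          -- htail from (q₁, z) to (q', z+1)
          obtain ⟨n₁, n₂, q₂, q₃, hs, P1, hinc, P2⟩ :=
            MW.rise n' τ q₁ z q' (z + 1) htail (by omega)
          obtain ⟨z₀, rfl⟩ : ∃ z₀, z = z₀ + 1 := ⟨z - 1, by omega⟩
          obtain ⟨k₁, mw₁⟩ := (IH n₁ (by omega)).1 τ z₀ q₁ q₂ (by omega) P1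
          obtain ⟨k₂, mw₂⟩ :=
            (IH n₂ (by omega)).1 τ (z₀ + 1) q₃ q' (by omega) P2
          exact ⟨_, MW.step_dec htr (mw₁.concat ((MW.one_inc hinc).concat mw₂))⟩
        | @step_exc n₁ n₂ _ τ₂ _ q₁ r q₃ _ y _ hpush hin hpop htail =>
          obtain ⟨k, r', y', mwin, pop'⟩ :=
            (IH n₁ (by omega)).2 τ₂ z q₁ r y q₃ hz hin hpop
          obtain ⟨k₂, mw₂⟩ := (IH n₂ (by omega)).1 τ z q₃ q' hz htail
          exact ⟨_, MW.step_exc hpush mwin pop' mw₂⟩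
    · -- return part
      intro τ z q r y q' hz h hpop
      rcases eq_or_lt_of_le hz with rfl | hz'
      · exact hR τ (q, q') ⟨n, r, y, h, hpop⟩
      · have hz1 : m + 1 ≤ z := hz'
        cases h with
        | refl => exact ⟨0, q, z, MW.refl 0 τ q z, hpop⟩
        | @step_id n' _ _ q₁ _ _ htr htail =>
          obtain ⟨k, r', y', mw, pop'⟩ :=
            (IH n' (by omega)).2 τ z q₁ r y q' hz htail hpop
          exact ⟨k + 1, r', y', MW.step_id htr mw, pop'⟩
        | @step_inc n' _ _ q₁ _ _ htr htail =>
          obtain ⟨k, r', y', mw, pop'⟩ :=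
            (IH n' (by omega)).2 τ (z + 1) q₁ r y q' (by omega) htail hpop
          exact ⟨k + 1, r', y', MW.step_inc htr mw, pop'⟩
        | @step_dec n' _ _ q₁ x₁ _ htr htail =>
          obtain ⟨z₀, rfl⟩ : ∃ z₀, z = z₀ + 1 := ⟨z - 1, by omega⟩
          obtain ⟨k, r', y', mw, pop'⟩ :=
            (IH n' (by omega)).2 τ z₀ q₁ r y q' (by omega) htail hpop
          exact ⟨k + 1, r', y', MW.step_dec htr mw, pop'⟩
        | @step_exc n₁ n₂ _ τ₂ _ q₁ rr q₃ _ yy _ hpush hin hpopin htail =>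
          obtain ⟨k, r', y', mwin, pop'⟩ :=
            (IH n₁ (by omega)).2 τ₂ z q₁ rr yy q₃ hz hin hpopin
          obtain ⟨k₂, r₂, y₂, mwtail, pop₂⟩ :=
            (IH n₂ (by omega)).2 τ z q₃ r y q' hz htail hpop
          exact ⟨_, r₂, y₂, MW.step_exc hpush mwin pop' mwtail, pop₂⟩
/-! ### the loop sets coincide with walk-loops -/

lemma heightBounded_top {L : ℕ} {cfg : ℕ → Config Q Sig} :
    heightBounded (⊤ : ℕ∞) L cfg := by
  intro i _
  rw [add_top]
  exact le_top

lemma loopSet_eq_loopP (A : Aut Q Sig) (σ : Sig) (v : ℕ) :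
    LoopSet A ⊤ σ v = LoopP A σ v := by
  ext ⟨q, q'⟩
  constructor
  · rintro ⟨s, L, cfg, lab, hrun, h0, hL, hne, -⟩
    have h0' : (cfg 0).2 = [(σ, v)] ++ s := by rw [h0]; rfl
    obtain ⟨u₁, hu₁, hL2, hchain⟩ :=
      extract_rel L cfg lab hrun s [(σ, v)] h0' (by simp) hne
    have hu : u₁ = [(σ, v)] := by
      have : u₁ ++ s = [(σ, v)] ++ s := by rw [← hL2, hL]; rfl
      exact List.append_cancel_right this
    rw [hu] at hchain
    have h01 : (cfg 0).1 = q := by rw [h0]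
    have hL1 : (cfg L).1 = q' := by rw [hL]
    rw [h01, hL1] at hchain
    obtain ⟨-, k, hmw⟩ := chain_to_MW L σ v q q' (σ, v) hchain
    exact ⟨k, hmw⟩
  · rintro ⟨n, hmw⟩
    obtain ⟨L, hchain⟩ := MW_to_chain hmw
    obtain ⟨cfg, lab, hrun, h0, hL⟩ := chain_to_run (σ, HOp.id) hchain
    refine ⟨[], L, cfg, lab, hrun, by simpa using h0, by simpa using hL, ?_,
      heightBounded_top⟩
    intro i hi
    rcases eq_or_lt_of_le hi with rfl | hlt
    · rw [hL]; simp
    · obtain ⟨k, rest, htop, -, -⟩ := hrun i hlt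
      simp [htop]
/-! ### stabilization by counting -/

def SFam (A : Aut Q Sig) (v : ℕ) : Set (Bool × Sig × Q × Q) :=
  {t | if t.1 then (t.2.2.1, t.2.2.2) ∈ LoopP A t.2.1 v
       else (t.2.2.1, t.2.2.2) ∈ RetP A t.2.1 v}

lemma sFam_mono (A : Aut Q Sig) {v v' : ℕ} (h : v ≤ v') :
    SFam A v ⊆ SFam A v' := by
  rintro ⟨b, τ, p1, p2⟩ ht
  cases b with
  | true =>
    simp only [SFam, Set.mem_setOf_eq, if_pos rfl] at ht ⊢
    exact loopP_mono h ht
  | false =>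
    simp only [SFam, Set.mem_setOf_eq, Bool.false_eq_true, if_neg] at ht ⊢
    · exact retP_mono h ht

lemma loopP_stab (A : Aut Q Sig) (i : ℕ) (hstab : SFam A i = SFam A (i + 1)) :
    ∀ v, i ≤ v → ∀ τ, LoopP A τ v = LoopP A τ i := by
  have hL : ∀ τ (p : Q × Q), p ∈ LoopP A τ (i + 1) → p ∈ LoopP A τ i := by
    intro τ p hp
    have h1 : ((true, τ, p.1, p.2) : Bool × Sig × Q × Q) ∈ SFam A (i + 1) := by
      simp only [SFam, Set.mem_setOf_eq, if_pos rfl]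
      simpa using hp
    rw [← hstab] at h1
    simp only [SFam, Set.mem_setOf_eq, if_pos rfl] at h1
    simpa using h1
  have hR : ∀ τ (p : Q × Q), p ∈ RetP A τ (i + 1) → p ∈ RetP A τ i := by
    intro τ p hp
    have h1 : ((false, τ, p.1, p.2) : Bool × Sig × Q × Q) ∈ SFam A (i + 1) := by
      simp only [SFam, Set.mem_setOf_eq, Bool.false_eq_true, if_neg]
      · simpa using hp
    rw [← hstab] at h1
    simp only [SFam, Set.mem_setOf_eq, Bool.false_eq_true, if_neg] at h1
    · simpa using h1
  have key : ∀ k τ, LoopP A τ (i + k) ⊆ LoopP A τ i := by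
    intro k
    induction k with
    | zero => intro τ; simp
    | succ k ih =>
      intro τ
      refine subset_trans ?_ (ih τ)
      rintro ⟨q, q'⟩ ⟨n, mw⟩
      exact (core_transfer i hL hR n).1 τ (i + k) q q' (by omega) mw
  intro v hv τ
  apply le_antisymm
  · have : v = i + (v - i) := by omega
    rw [this]
    exact key (v - i) τ
  · exact loopP_mono hv

lemma exists_stab (A : Aut Q Sig) [Fintype Q] [Fintype Sig] :
    ∃ i ≤ 2 * (Fintype.card Sig * Fintype.card Q ^ 2),
      SFam A i = SFam A (i + 1) := by
  classical
  set N := 2 * (Fintype.card Sig * Fintype.card Q ^ 2) with hN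
  by_contra hcon
  push_neg at hcon
  have hcard : Nat.card (Bool × Sig × Q × Q) = N := by
    rw [Nat.card_eq_fintype_card]
    simp only [Fintype.card_prod, Fintype.card_bool, hN]
    ring
  have grow : ∀ j ≤ N + 1, j ≤ (SFam A j).ncard := by
    intro j
    induction j with
    | zero => intro _; exact Nat.zero_le _
    | succ j ih =>
      intro hj
      have hss : SFam A j ⊂ SFam A (j + 1) :=
        (sFam_mono A (by omega)).ssubset_of_ne (hcon j (by omega))
      have hlt : (SFam A j).ncard < (SFam A (j + 1)).ncard :=
        Set.ncard_lt_ncard hss (Set.toFinite _)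
      have := ih (by omega)
      omega
  have h1 : N + 1 ≤ (SFam A (N + 1)).ncard := grow (N + 1) le_rfl
  have h2 : (SFam A (N + 1)).ncard ≤ N := by
    calc (SFam A (N + 1)).ncard ≤ (Set.univ : Set (Bool × Sig × Q × Q)).ncard :=
          Set.ncard_le_ncard (Set.subset_univ _) (Set.toFinite _)
      _ = N := by rw [Set.ncard_univ, hcard]
  omega
end HOCA

/-- For a 2-HOCA without zero-test, loops stabilize in the
counter value: for every `σ ∈ Σ` and every `m ≥ 2·|Σ|·|Q|²`,
`Loop_∞((σ,m)) = Loop_∞((σ,2·|Σ|·|Q|²))`. -/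
theorem hoca_loop_counter_stabilizes {Q Sig : Type} [Fintype Q] [Fintype Sig]
    (A : HOCA.Aut Q Sig) :
    ∀ (σ : Sig) (m : ℕ),
      2 * (Fintype.card Sig * Fintype.card Q ^ 2) ≤ m →
      HOCA.LoopSet A ⊤ σ m =
        HOCA.LoopSet A ⊤ σ (2 * (Fintype.card Sig * Fintype.card Q ^ 2)) := by
  intro σ m hm
  obtain ⟨i, hi, hstab⟩ := HOCA.exists_stab A
  rw [HOCA.loopSet_eq_loopP, HOCA.loopSet_eq_loopP,
    HOCA.loopP_stab A i hstab m (by omega) σ,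
    HOCA.loopP_stab A i hstab _ hi σ]
end

section
/- In a 2-HOCA without zero-test, if k₀ satisfies Ret_{k₀}((σ,i)) = Ret_{k₀+1}((σ,i)) for all σ ∈ Σ and all i ∈ ℕ, then Ret_k((σ,i)) = Ret_{k₀}((σ,i)) for all k ≥ k₀, all σ, and all i (returns stabilize in the height bound once they stop growing). -/
/-!
A return either pops at once, or makes a stay-move and continues as a return, or pushes, performs
a subreturn of the pushed entry and then continues as a return. The subreturn starts one level
higher, so it has one unit less of height budget. Describing `Ret_k` inductively by this
decomposition (`IsReturn`), the hypothesis lets every subreturn of budget `k₀ + 1` be replaced by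
one of budget `k₀`; by induction on the decomposition every return, whatever its height, then has
a witness of budget `k₀ + 1`, hence one of budget `k₀`.
-/

namespace Relation

theorem reflTransGen_iff_exists_path {α Λ : Type*} [Nonempty Λ] {S : Λ → α → α → Prop}
    {a b : α} :
    ReflTransGen (fun x y => ∃ l, S l x y) a b ↔
      ∃ (L : ℕ) (f : ℕ → α) (lab : ℕ → Λ),
        f 0 = a ∧ f L = b ∧ ∀ i < L, S (lab i) (f i) (f (i + 1)) := by
  constructor
  · intro h
    induction h with
    | refl => exact ⟨0, fun _ => a, fun _ => Classical.arbitrary Λ, rfl, rfl, by simp⟩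
    | @tail c d _ hcd ih =>
      obtain ⟨L, f, lab, h0, hL, hf⟩ := ih
      obtain ⟨l, hl⟩ := hcd
      refine ⟨L + 1, Function.update f (L + 1) d, Function.update lab L l,
        by simpa using h0, by simp, fun i hi => ?_⟩
      rcases Nat.lt_succ_iff_lt_or_eq.mp hi with hi | rfl
      · simpa [Function.update_of_ne hi.ne, Function.update_of_ne (Nat.succ_lt_succ hi).ne,
          Function.update_of_ne (Nat.lt_succ_of_lt hi).ne] using hf i hi
      · simpa [hL] using hl
  · rintro ⟨L, f, lab, rfl, rfl, hf⟩
    induction L with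
    | zero => rfl
    | succ L ih => exact (ih fun i hi => hf i (by omega)).tail ⟨lab L, hf L (by omega)⟩

end Relation

namespace HOCA

open Relation

variable {Q Sig : Type} {A : Aut Q Sig}

def StepBy (A : Aut Q Sig) (l : Sig × HOp Sig) (c d : Config Q Sig) : Prop :=
  ∃ n rest, c.2 = (l.1, n) :: rest ∧ A.Δ c.1 l.1 l.2 d.1 ∧ applyOp l.2 c.2 = some d.2

def GuardedStep (A : Aut Q Sig) (ok : List (Sig × ℕ) → Prop) (H : ℕ) (c d : Config Q Sig) :
    Prop :=
  ∃ l, StepBy A l c d ∧ ok c.2 ∧ d.2.length ≤ H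

theorem GuardedStep.mono {ok ok' : List (Sig × ℕ) → Prop} {H H' : ℕ}
    (hok : ∀ u, ok u → ok' u) (hH : H ≤ H') :
    GuardedStep A ok H ≤ GuardedStep A ok' H' :=
  fun _ _ ⟨l, hl, hc, hd⟩ => ⟨l, hl, hok _ hc, hd.trans hH⟩

theorem heightBounded_iff {k L : ℕ} {cfg : ℕ → Config Q Sig} :
    heightBounded k L cfg ↔ ∀ i < L, (cfg (i + 1)).2.length ≤ (cfg 0).2.length + k := by
  constructor
  · exact fun h i hi => by exact_mod_cast h (i + 1) hi
  · rintro h (_ | i) hi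
    · exact le_self_add
    · exact_mod_cast h i (by omega)

theorem mem_retSet_iff {k : ℕ} {σ : Sig} {m : ℕ} {q q' : Q} :
    (q, q') ∈ RetSet A k σ m ↔ ∃ s ≠ [],
      ReflTransGen (GuardedStep A (· ≠ s) (s.length + 1 + k)) (q, (σ, m) :: s) (q', s) := by
  have : Nonempty (Sig × HOp Sig) := ⟨(σ, .id)⟩
  constructor
  · rintro ⟨s, L, cfg, lab, hs, hrun, h0, hL, hne, hb⟩
    rw [heightBounded_iff, h0] at hb
    exact ⟨s, hs, reflTransGen_iff_exists_path.mpr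
      ⟨L, cfg, lab, h0, hL, fun i hi => ⟨hrun i hi, hne i hi, by simpa using hb i hi⟩⟩⟩
  · rintro ⟨s, hs, h⟩
    obtain ⟨L, cfg, lab, h0, hL, hf⟩ := reflTransGen_iff_exists_path.mp h
    refine ⟨s, L, cfg, lab, hs, fun i hi => (hf i hi).1, h0, hL, fun i hi => (hf i hi).2.1, ?_⟩
    rw [heightBounded_iff, h0]
    exact fun i hi => by simpa using (hf i hi).2.2

theorem retSet_mono {j k : ℕ∞} (hjk : j ≤ k) {σ : Sig} {m : ℕ} :
    RetSet A j σ m ⊆ RetSet A k σ m := by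
  rintro p ⟨s, L, cfg, lab, hs, hrun, h0, hL, hm, hb⟩
  exact ⟨s, L, cfg, lab, hs, hrun, h0, hL, hm,
    fun i hi => (hb i hi).trans (add_le_add_right hjk _)⟩

theorem applyOp_cons_eq_some {op : HOp Sig} {σ : Sig} {m : ℕ} {u v : List (Sig × ℕ)}
    (h : applyOp op ((σ, m) :: u) = some v) :
    (op = .pop ∧ v = u) ∨ (∃ τ, op = .push τ ∧ v = (τ, m) :: (σ, m) :: u) ∨
      ∃ m', (∀ u', applyOp op ((σ, m) :: u') = some ((σ, m') :: u')) ∧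
        v = (σ, m') :: u := by
  cases op with
  | pop =>
    cases u with
    | nil => simp [applyOp] at h
    | cons t u => simp_all [applyOp]
  | push τ => simp_all [applyOp]
  | inc => exact Or.inr (Or.inr ⟨m + 1, fun _ => rfl, by simp_all [applyOp]⟩)
  | dec =>
    cases m with
    | zero => simp [applyOp] at h
    | succ m => exact Or.inr (Or.inr ⟨m, fun _ => rfl, by simp_all [applyOp]⟩)
  | id => exact Or.inr (Or.inr ⟨m, fun _ => rfl, by simp_all [applyOp]⟩)

/-- `k` bounds the height increase above the storage the return starts from. -/
inductive IsReturn (A : Aut Q Sig) : ℕ → Sig → ℕ → Q → Q → Prop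
  | pop {k σ m q q'} : A.Δ q σ .pop q' → IsReturn A k σ m q q'
  | stay {k σ m m' op q q₁ q'} : A.Δ q σ op q₁ →
      (∀ u, applyOp op ((σ, m) :: u) = some ((σ, m') :: u)) →
      IsReturn A k σ m' q₁ q' → IsReturn A k σ m q q'
  | push {k σ τ m q q₁ q₂ q'} : A.Δ q σ (.push τ) q₁ → IsReturn A k τ m q₁ q₂ →
      IsReturn A (k + 1) σ m q₂ q' → IsReturn A (k + 1) σ m q q'

/-- Successive returns popping the entries of `w` from the top down; each entry lies one level
deeper than the previous one and so has one more unit of height budget. -/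
def IsReturnSeq (A : Aut Q Sig) : ℕ → List (Sig × ℕ) → Q → Q → Prop
  | _, [], q, q' => q = q'
  | k, (σ, m) :: w, q, q' => ∃ q₁, IsReturn A k σ m q q₁ ∧ IsReturnSeq A (k + 1) w q₁ q'

/-- The run is guarded by its height rather than by `· ≠ s`, so that the run of a subreturn
remains admissible inside the enclosing return. -/
theorem IsReturn.reflTransGen {k : ℕ} {σ : Sig} {m : ℕ} {q q' : Q}
    (h : IsReturn A k σ m q q') {s : List (Sig × ℕ)} (hs : s ≠ []) :
    ReflTransGen (GuardedStep A (s.length < ·.length) (s.length + 1 + k))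
      (q, (σ, m) :: s) (q', s) := by
  induction h generalizing s with
  | @pop k σ m q q' hΔ =>
    obtain ⟨t, s, rfl⟩ := List.exists_cons_of_ne_nil hs
    exact .single ⟨(σ, .pop), ⟨m, _, rfl, hΔ, rfl⟩, by simp,
      by simp only [List.length_cons]; omega⟩
  | @stay k σ m m' op q q₁ q' hΔ hop _ ih =>
    exact .head ⟨(σ, op), ⟨m, s, rfl, hΔ, hop s⟩, by simp,
      by simp only [List.length_cons]; omega⟩ (ih hs)
  | @push k σ τ m q q₁ q₂ q' hΔ _ _ ihsub ihtail =>
    have hsub : ReflTransGen (GuardedStep A (s.length < ·.length) (s.length + 1 + (k + 1)))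
        (q₁, (τ, m) :: (σ, m) :: s) (q₂, (σ, m) :: s) :=
      ReflTransGen.mono (GuardedStep.mono (fun _ => lt_trans (by simp))
        (by simp only [List.length_cons]; omega)) _ _ (ihsub (s := (σ, m) :: s) (by simp))
    exact .head ⟨(σ, .push τ), ⟨m, s, rfl, hΔ, rfl⟩, by simp,
      by simp only [List.length_cons]; omega⟩ (hsub.trans (ihtail hs))

theorem isReturnSeq_of_reflTransGen {b : List (Sig × ℕ)} {H : ℕ} {c : Config Q Sig} {q' : Q}
    (h : ReflTransGen (GuardedStep A (· ≠ b) H) c (q', b)) :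
    ∀ {k w}, c.2 = w ++ b → c.2.length + k = H → IsReturnSeq A k w c.1 q' := by
  induction h using ReflTransGen.head_induction_on with
  | refl =>
    intro k w hw _
    obtain rfl : w = [] := List.append_left_eq_self.mp hw.symm
    rfl
  | @head c d hcd _ ih =>
    intro k w hw hk
    obtain ⟨⟨σ', op⟩, ⟨n, rest, htop, hΔ, happ⟩, hne, hd⟩ := hcd
    have hw0 : w ≠ [] := by
      rintro rfl
      exact hne hw
    obtain ⟨⟨σ, m⟩, w, rfl⟩ := List.exists_cons_of_ne_nil hw0
    obtain ⟨⟨rfl, rfl⟩, -⟩ : (σ = σ' ∧ m = n) ∧ w ++ b = rest := by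
      simpa [hw] using htop
    rw [hw, List.cons_append] at happ hk
    simp only [List.length_cons, List.length_append] at hk
    rcases applyOp_cons_eq_some happ with ⟨rfl, hv⟩ | ⟨τ, rfl, hv⟩ | ⟨m', hop, hv⟩
    · exact ⟨d.1, .pop hΔ, ih hv (by rw [hv, List.length_append]; omega)⟩
    · have hlen : d.2.length = w.length + b.length + 2 := by simp [hv]
      obtain ⟨k, rfl⟩ := Nat.exists_eq_succ_of_ne_zero (n := k) (by omega)
      obtain ⟨q₂, hsub, q₃, htail, hseq⟩ :=
        ih (k := k) (w := (τ, m) :: (σ, m) :: w) hv (by omega)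
      exact ⟨q₃, .push hΔ hsub htail, hseq⟩
    · have hlen : d.2.length = w.length + b.length + 1 := by simp [hv]
      obtain ⟨q₁, hret, hseq⟩ := ih (k := k) (w := (σ, m') :: w) hv (by omega)
      exact ⟨q₁, .stay hΔ hop hret, hseq⟩

theorem mem_retSet_iff_isReturn {k : ℕ} {σ : Sig} {m : ℕ} {q q' : Q} :
    (q, q') ∈ RetSet A k σ m ↔ IsReturn A k σ m q q' := by
  rw [mem_retSet_iff]
  constructor
  · rintro ⟨s, -, h⟩
    obtain ⟨q₁, hret, rfl⟩ :=
      isReturnSeq_of_reflTransGen h (k := k) (w := [(σ, m)]) rfl (by simp)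
    exact hret
  · intro h
    refine ⟨[(σ, 0)], by simp, ReflTransGen.mono ?_ _ _ (h.reflTransGen (by simp))⟩
    exact GuardedStep.mono (fun u hu h' => by simp [h'] at hu) le_rfl

theorem IsReturn.succ_of_stable {k₀ : ℕ}
    (hstab : ∀ σ m q q', IsReturn A (k₀ + 1) σ m q q' → IsReturn A k₀ σ m q q')
    {k : ℕ} {σ : Sig} {m : ℕ} {q q' : Q} (h : IsReturn A k σ m q q') :
    IsReturn A (k₀ + 1) σ m q q' := by
  induction h with
  | pop hΔ => exact .pop hΔ
  | stay hΔ hop _ ih => exact .stay hΔ hop ih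
  | push hΔ _ _ ihsub ihtail => exact .push hΔ (hstab _ _ _ _ ihsub) ihtail

end HOCA

theorem hoca_ret_stabilizes_in_height_general {Q Sig : Type}
    (A : HOCA.Aut Q Sig) (k₀ : ℕ)
    (hstab : ∀ (σ : Sig) (i : ℕ),
      HOCA.RetSet A (k₀ : ℕ∞) σ i = HOCA.RetSet A ((k₀ + 1 : ℕ) : ℕ∞) σ i) :
    ∀ k : ℕ, k₀ ≤ k → ∀ (σ : Sig) (i : ℕ),
      HOCA.RetSet A (k : ℕ∞) σ i = HOCA.RetSet A (k₀ : ℕ∞) σ i := by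
  have hret : ∀ σ m q q',
      HOCA.IsReturn A (k₀ + 1) σ m q q' → HOCA.IsReturn A k₀ σ m q q' := by
    intro σ m q q' h
    rwa [← HOCA.mem_retSet_iff_isReturn, ← hstab, HOCA.mem_retSet_iff_isReturn] at h
  intro k hk σ i
  refine (HOCA.retSet_mono (by exact_mod_cast hk)).antisymm' fun ⟨q, q'⟩ h => ?_
  rw [HOCA.mem_retSet_iff_isReturn] at h ⊢
  exact hret _ _ _ _ (h.succ_of_stable hret)

/-- In a 2-HOCA without zero-test, if `k₀` satisfies
`Ret_{k₀}((σ,i)) = Ret_{k₀+1}((σ,i))` for all `σ` and all `i`, then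
`Ret_k((σ,i)) = Ret_{k₀}((σ,i))` for all `k ≥ k₀`, all `σ`, and all `i`. -/
theorem hoca_ret_stabilizes_in_height {Q Sig : Type} [Fintype Q] [Fintype Sig]
    (A : HOCA.Aut Q Sig) (k₀ : ℕ)
    (hstab : ∀ (σ : Sig) (i : ℕ),
      HOCA.RetSet A (k₀ : ℕ∞) σ i = HOCA.RetSet A ((k₀ + 1 : ℕ) : ℕ∞) σ i) :
    ∀ k : ℕ, k₀ ≤ k → ∀ (σ : Sig) (i : ℕ),
      HOCA.RetSet A (k : ℕ∞) σ i = HOCA.RetSet A (k₀ : ℕ∞) σ i :=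
  hoca_ret_stabilizes_in_height_general A k₀ hstab
end
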